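/- Let N = (0,1) ∪ (1,2) ∪ (2,3) ⊆ ℝ, let γ : N → ℝ² be given by γ(t) = (t, −1) for t ∈ (0,1), γ(t) = (t−1, 0) for t ∈ (1,2), and γ(t) = (t−2, 1) for t ∈ (2,3), and let p₁ = (a, 0), p₂ = (b, 0) with a, b ∈ ℝ, p = (p₁, p₂). Then for every t₀ ∈ (0,1): (i) D_p(γ(t₀)) = D_p(γ(t₀ + 2)), and (ii) the derivatives (D_p ∘ γ)′(t₀) = 2(t₀ − a, t₀ − b) and (D_p ∘ γ)′(t₀ + 2) = 2(t₀ − a, t₀ − b) are equal, so the subspace of ℝ² spanned by (D_p ∘ γ)′(t₀) and (D_p ∘ γ)′(t₀ + 2) has dimension at most 1. -/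

import Mathlib

noncomputable section

abbrev E2 := EuclideanSpace ℝ (Fin 2)

/-- The point `(a, b) ∈ ℝ²`. -/
def pt (a b : ℝ) : E2 := (EuclideanSpace.equiv (Fin 2) ℝ).symm ![a, b]

/-- The distance-squared mapping `D_p : ℝ² → ℝ²` associated to `p = (p₁, p₂)`. -/
def Dp (p₁ p₂ : E2) (x : E2) : E2 :=
  (EuclideanSpace.equiv (Fin 2) ℝ).symm ![‖x - p₁‖ ^ 2, ‖x - p₂‖ ^ 2]

/-- `f : ℝ → ℝ²` is an immersion with normal crossings: it is smooth, `f′(q) ≠ 0` everywhere,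
every fiber has at most 2 elements, and at any two distinct points with the same image the
subspace `f′(q₁)ℝ + f′(q₂)ℝ` of `ℝ²` has dimension 2. -/
def IsImmersionWithNormalCrossingsR (f : ℝ → E2) : Prop :=
  ContDiff ℝ (⊤ : ℕ∞) f ∧
  (∀ q : ℝ, deriv f q ≠ 0) ∧
  (∀ q₁ q₂ q₃ : ℝ, f q₁ = f q₂ → f q₂ = f q₃ → q₁ = q₂ ∨ q₁ = q₃ ∨ q₂ = q₃) ∧
  (∀ q₁ q₂ : ℝ, q₁ ≠ q₂ → f q₁ = f q₂ →
    Module.finrank ℝ ↥(Submodule.span ℝ {deriv f q₁, deriv f q₂}) = 2)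

/-- The piecewise curve: `γ(t) = (t, −1)` on `(0,1)`, `(t−1, 0)` on `(1,2)`,
`(t−2, 1)` on `(2,3)` (extended arbitrarily elsewhere by the same formulas). -/
def γpw : ℝ → E2 := fun t =>
  if t < 1 then pt t (-1) else if t < 2 then pt (t - 1) 0 else pt (t - 2) 1

lemma pt_sub (x y u v : ℝ) : pt x y - pt u v = pt (x - u) (y - v) := by
  simp only [pt]
  ext i
  fin_cases i <;> simp [EuclideanSpace.equiv]

lemma norm_pt_sq (x y : ℝ) : ‖pt x y‖ ^ 2 = x ^ 2 + y ^ 2 := by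
  rw [← real_inner_self_eq_norm_sq]
  simp [pt, EuclideanSpace.equiv, EuclideanSpace.inner_eq_star_dotProduct]
  rw [EuclideanSpace.norm_sq_eq]
  simp [Fin.sum_univ_two]

lemma Dp_pt (a b x y : ℝ) :
    Dp (pt a 0) (pt b 0) (pt x y) = pt ((x - a) ^ 2 + y ^ 2) ((x - b) ^ 2 + y ^ 2) := by
  simp only [Dp, pt_sub, sub_zero, norm_pt_sq]
  rfl

lemma hasDerivAt_pt (f g : ℝ → ℝ) (f' g' t : ℝ)
    (hf : HasDerivAt f f' t) (hg : HasDerivAt g g' t) :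
    HasDerivAt (fun t => pt (f t) (g t)) (pt f' g') t := by
  have h : HasDerivAt (fun t => (![f t, g t] : Fin 2 → ℝ)) ![f', g'] t := by
    rw [hasDerivAt_pi]
    intro i
    fin_cases i <;> simpa
  exact ((EuclideanSpace.equiv (Fin 2) ℝ).symm.hasFDerivAt).comp_hasDerivAt t h

lemma hD (c u s : ℝ) : HasDerivAt (fun t : ℝ => (t - c) ^ 2 + u) (2 * (s - c)) s := by
  have h := (((hasDerivAt_id s).sub_const c).fun_pow 2).add_const u
  refine h.congr_deriv ?_
  simp only [id_eq, pow_one, mul_one]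
  push_cast
  ring

theorem stmt16 (a b : ℝ) (t₀ : ℝ) (ht₀ : t₀ ∈ Set.Ioo (0:ℝ) 1) :
    Dp (pt a 0) (pt b 0) (γpw t₀) = Dp (pt a 0) (pt b 0) (γpw (t₀ + 2)) ∧
    deriv (fun t => Dp (pt a 0) (pt b 0) (γpw t)) t₀ = pt (2 * (t₀ - a)) (2 * (t₀ - b)) ∧
    deriv (fun t => Dp (pt a 0) (pt b 0) (γpw t)) (t₀ + 2) = pt (2 * (t₀ - a)) (2 * (t₀ - b)) ∧
    Module.finrank ℝ
      ↥(Submodule.span ℝ {deriv (fun t => Dp (pt a 0) (pt b 0) (γpw t)) t₀,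
          deriv (fun t => Dp (pt a 0) (pt b 0) (γpw t)) (t₀ + 2)}) ≤ 1 := by
  obtain ⟨h0, h1⟩ := ht₀
  have hγ1 : ∀ t : ℝ, t < 1 → γpw t = pt t (-1) := fun t ht => if_pos ht
  have hγ3 : ∀ t : ℝ, 2 < t → γpw t = pt (t - 2) 1 := by
    intro t ht
    rw [γpw, if_neg (by linarith), if_neg (by linarith)]
  have hev1 : (fun t => Dp (pt a 0) (pt b 0) (γpw t)) =ᶠ[nhds t₀]
      fun t => pt ((t - a) ^ 2 + 1) ((t - b) ^ 2 + 1) := by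
    filter_upwards [eventually_lt_nhds h1] with t ht
    rw [hγ1 t ht, Dp_pt]
    norm_num
  have hev2 : (fun t => Dp (pt a 0) (pt b 0) (γpw t)) =ᶠ[nhds (t₀ + 2)]
      fun t => pt ((t - (a + 2)) ^ 2 + 1) ((t - (b + 2)) ^ 2 + 1) := by
    filter_upwards [eventually_gt_nhds (show (2:ℝ) < t₀ + 2 by linarith)] with t ht
    rw [hγ3 t ht, Dp_pt]
    norm_num
    ring_nf
  have hd1 : deriv (fun t => Dp (pt a 0) (pt b 0) (γpw t)) t₀
      = pt (2 * (t₀ - a)) (2 * (t₀ - b)) := by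
    rw [hev1.deriv_eq]
    exact (hasDerivAt_pt _ _ _ _ _ (hD a 1 t₀) (hD b 1 t₀)).deriv
  have hd2 : deriv (fun t => Dp (pt a 0) (pt b 0) (γpw t)) (t₀ + 2)
      = pt (2 * (t₀ - a)) (2 * (t₀ - b)) := by
    rw [hev2.deriv_eq]
    have h := (hasDerivAt_pt _ _ _ _ _ (hD (a + 2) 1 (t₀ + 2)) (hD (b + 2) 1 (t₀ + 2))).deriv
    rw [h]
    congr 1 <;> ring
  refine ⟨?_, hd1, hd2, ?_⟩
  · rw [hγ1 t₀ h1, hγ3 (t₀ + 2) (by linarith), Dp_pt, Dp_pt]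
    norm_num
  · rw [hd1, hd2, Set.pair_eq_singleton]
    calc Module.finrank ℝ ↥(Submodule.span ℝ {pt (2 * (t₀ - a)) (2 * (t₀ - b))})
        ≤ ({pt (2 * (t₀ - a)) (2 * (t₀ - b))} : Set E2).toFinset.card :=
          finrank_span_le_card _
      _ ≤ 1 := by simp
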